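/- arXiv:2009.04910 — 3 statements merged into one kernel-verified Lean document; each statement's English description precedes it below -/
import Mathlib

section
/- Let κ ∈ (0,1), λ = √(1-κ²). Suppose on a neighborhood of 0 ∈ ℝ the analytic functions φ and ψ satisfy φ(0)=ψ(0)=0, sin ψ = κ sin φ, and φ is the inverse of f(T) = ∫₀^T F(1/4,3/4;1/2; κ² sin²t) dt. Then d = cos ∘ ψ satisfies d(0)=1 and (d')² = 2(1-d)(d² - λ²). -/
/-!
By the duplication formula for Pochhammer symbols, `F(1/4, 3/4; 1/2; s²)` is the even part
`((1 - s)^(-1/2) + (1 + s)^(-1/2)) / 2` of the binomial series of `(1 - s)^(-1/2)`. Differentiating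
`f (φ u) = u` and `sin ψ = κ sin φ` then gives, with `c = cos ψ`, the relations
`(1 + c) φ'² = 2 c²` and `c² ψ'² = κ² cos² φ φ'² = (c² - λ²) φ'²`. Because `ψ 0 = 0` and
`|sin ψ| ≤ κ < 1`, `c` stays positive, and eliminating `φ'` yields
`d'² = sin² ψ ψ'² = 2 (1 - c) (c² - λ²)`.
-/

open Real

noncomputable def hyp (a b c x : ℝ) : ℝ :=
  ∑' n : ℕ, ((∏ i ∈ Finset.range n, (a + i)) * (∏ i ∈ Finset.range n, (b + i)) /
    ((∏ i ∈ Finset.range n, (c + i)) * (n.factorial : ℝ))) * x ^ n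

open Finset Filter Topology

lemma ascPochhammer_eval_eq_prod_range {R : Type*} [CommSemiring R] (n : ℕ) (r : R) :
    (ascPochhammer R n).eval r = ∏ j ∈ range n, (r + j) := by
  induction n with
  | zero => simp
  | succ n ih => simp [ascPochhammer_succ_right, ih, prod_range_succ]

lemma hasSum_inv_sqrt_one_sub {y : ℝ} (hy : |y| < 1) :
    HasSum (fun n => (∏ i ∈ range n, (1 / 2 + i : ℝ)) / n.factorial * y ^ n) (√(1 - y))⁻¹ := by
  have h := (one_div_one_sub_rpow_hasFPowerSeriesOnBall_zero (1 / 2)).hasSum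
    (y := y) (by simpa [enorm_eq_nnnorm, ← NNReal.coe_lt_one] using hy)
  have hcoeff (n : ℕ) :
      Ring.choose ((1 / 2 : ℝ) + n - 1) n = (∏ i ∈ range n, (1 / 2 + i : ℝ)) / n.factorial := by
    rw [← Ring.multichoose_eq, eq_div_iff (by positivity), mul_comm, ← nsmul_eq_mul,
      Ring.factorial_nsmul_multichoose_eq_ascPochhammer, Polynomial.ascPochhammer_smeval_eq_eval,
      ascPochhammer_eval_eq_prod_range]
  rw [FormalMultilinearSeries.ofScalars_apply_eq', zero_add] at h
  simp only [hcoeff, smul_eq_mul] at h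
  rwa [sqrt_eq_rpow, ← one_div]

lemma prod_range_two_mul_half (m : ℕ) :
    ∏ i ∈ range (2 * m), (1 / 2 + i : ℝ) =
      4 ^ m * (∏ i ∈ range m, (1 / 4 + i : ℝ)) * ∏ i ∈ range m, (3 / 4 + i : ℝ) := by
  induction m with
  | zero => simp
  | succ m ih =>
    rw [show 2 * (m + 1) = 2 * m + 1 + 1 by ring, prod_range_succ, prod_range_succ, ih,
      prod_range_succ, prod_range_succ]
    push_cast
    ring

lemma factorial_two_mul_eq_four_pow_mul_prod (m : ℕ) :
    ((2 * m).factorial : ℝ) = 4 ^ m * m.factorial * ∏ i ∈ range m, (1 / 2 + i : ℝ) := by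
  induction m with
  | zero => simp
  | succ m ih =>
    rw [show 2 * (m + 1) = 2 * m + 1 + 1 by ring, Nat.factorial_succ, Nat.factorial_succ,
      Nat.factorial_succ, prod_range_succ]
    push_cast
    rw [ih]
    ring

noncomputable def invSqrtEvenPart (s : ℝ) : ℝ := ((√(1 - s))⁻¹ + (√(1 + s))⁻¹) / 2

lemma hyp_quarter_threeQuarters_half_sq {s : ℝ} (hs : |s| < 1) :
    hyp (1 / 4) (3 / 4) (1 / 2) (s ^ 2) = invSqrtEvenPart s := by
  set c : ℕ → ℝ := fun n => (∏ i ∈ range n, (1 / 2 + i : ℝ)) / (n.factorial : ℝ)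
  have hsum : HasSum (fun n => c n * s ^ n + c n * (-s) ^ n) ((√(1 - s))⁻¹ + (√(1 + s))⁻¹) := by
    simpa only [sub_neg_eq_add] using
      (hasSum_inv_sqrt_one_sub hs).add (hasSum_inv_sqrt_one_sub (y := -s) (by rwa [abs_neg]))
  have hodd : ∀ n ∉ Set.range (2 * ·), c n * s ^ n + c n * (-s) ^ n = 0 := by
    intro n hn
    rw [range_two_mul, Set.mem_ofPred_eq, Nat.not_even_iff_odd] at hn
    rw [hn.neg_pow]
    ring
  have heven := ((mul_right_injective₀ (two_ne_zero' ℕ)).hasSum_iff hodd).2 hsum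
  have hterm (m : ℕ) : (c (2 * m) * s ^ (2 * m) + c (2 * m) * (-s) ^ (2 * m)) / 2 =
      (∏ i ∈ range m, (1 / 4 + i : ℝ)) * (∏ i ∈ range m, (3 / 4 + i : ℝ)) /
        ((∏ i ∈ range m, (1 / 2 + i : ℝ)) * m.factorial) * (s ^ 2) ^ m := by
    have : 0 < ∏ i ∈ range m, (1 / 2 + i : ℝ) := prod_pos fun i _ => by positivity
    simp only [c, prod_range_two_mul_half, factorial_two_mul_eq_four_pow_mul_prod,
      Even.neg_pow ⟨m, two_mul m⟩, pow_mul]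
    field_simp
    ring
  rw [hyp, invSqrtEvenPart, ← ((heven.div_const 2).congr_fun fun m => (hterm m).symm).tsum_eq]

lemma abs_mul_sin_lt_one {κ : ℝ} (hκ : |κ| < 1) (t : ℝ) : |κ * sin t| < 1 := by
  rw [abs_mul]
  exact (mul_le_of_le_one_right (abs_nonneg κ) (abs_sin_le_one t)).trans_lt hκ

lemma hyp_quarter_threeQuarters_half_sq_mul_sin_sq {κ : ℝ} (hκ : |κ| < 1) (t : ℝ) :
    hyp (1 / 4) (3 / 4) (1 / 2) (κ ^ 2 * sin t ^ 2) = invSqrtEvenPart (κ * sin t) := by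
  rw [← hyp_quarter_threeQuarters_half_sq (abs_mul_sin_lt_one hκ t), mul_pow]

lemma continuousOn_invSqrtEvenPart : ContinuousOn invSqrtEvenPart (Set.Ioo (-1) 1) := by
  intro s hs
  have h₁ : 0 < 1 - s := by linarith [hs.2]
  have h₂ : 0 < 1 + s := by linarith [hs.1]
  unfold invSqrtEvenPart
  exact ContinuousAt.continuousWithinAt (by fun_prop (disch := positivity))

lemma continuous_invSqrtEvenPart_mul_sin {κ : ℝ} (hκ : |κ| < 1) :
    Continuous fun t => invSqrtEvenPart (κ * sin t) :=
  continuousOn_invSqrtEvenPart.comp_continuous (by fun_prop) fun t =>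
    abs_lt.1 (abs_mul_sin_lt_one hκ t)

lemma one_add_mul_sq_eq_of_invSqrtEvenPart_mul_eq_one {s c x : ℝ} (hc : 0 < c)
    (hsc : s ^ 2 + c ^ 2 = 1) (hx : invSqrtEvenPart s * x = 1) : (1 + c) * x ^ 2 = 2 * c ^ 2 := by
  have h₁ : 0 < 1 - s := by nlinarith
  have h₂ : 0 < 1 + s := by nlinarith
  set p := √(1 - s)
  set q := √(1 + s)
  have hp : p ^ 2 = 1 - s := sq_sqrt h₁.le
  have hq : q ^ 2 = 1 + s := sq_sqrt h₂.le
  have hpq : p * q = c := by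
    rw [← sqrt_mul h₁.le, show (1 - s) * (1 + s) = c ^ 2 by linear_combination -hsc,
      sqrt_sq hc.le]
  have hsum : (p + q) * x = 2 * c := by
    have : 0 < p := sqrt_pos.2 h₁
    have : 0 < q := sqrt_pos.2 h₂
    rw [invSqrtEvenPart] at hx
    field_simp at hx
    linear_combination hx + 2 * hpq
  -- squaring, with `(p + q)² = 2 + 2 p q = 2 + 2c`
  linear_combination ((p + q) * x + 2 * c) * hsum / 2 - x ^ 2 * (hp + hq + 2 * hpq) / 2

lemma mul_deriv_eq_one_of_integral_eventuallyEq {G φ : ℝ → ℝ} {a u : ℝ} (hG : Continuous G)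
    (hφ : DifferentiableAt ℝ φ u) (h : (fun v => ∫ t in a..φ v, G t) =ᶠ[𝓝 u] id) :
    G (φ u) * deriv φ u = 1 := by
  have hcomp := (hG.integral_hasStrictDerivAt a (φ u)).hasDerivAt.comp u hφ.hasDerivAt
  exact (hcomp.congr_of_eventuallyEq h.symm).unique (hasDerivAt_id u)

lemma cos_mul_deriv_eq_of_sin_eventuallyEq {κ u : ℝ} {φ ψ : ℝ → ℝ} (hφ : DifferentiableAt ℝ φ u)
    (hψ : DifferentiableAt ℝ ψ u) (h : (fun v => sin (ψ v)) =ᶠ[𝓝 u] fun v => κ * sin (φ v)) :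
    cos (ψ u) * deriv ψ u = κ * (cos (φ u) * deriv φ u) :=
  ((hasDerivAt_sin (ψ u)).comp u hψ.hasDerivAt).unique
    ((((hasDerivAt_sin (φ u)).comp u hφ.hasDerivAt).const_mul κ).congr_of_eventuallyEq h)

lemma IsPreconnected.cos_pos_of_abs_sin_lt_one {S : Set ℝ} (hS : IsPreconnected S) {ψ : ℝ → ℝ}
    (hψ : ContinuousOn ψ S) {a u : ℝ} (ha : a ∈ S) (hu : u ∈ S) (hψa : ψ a = 0)
    (hsin : ∀ v ∈ S, |sin (ψ v)| < 1) : 0 < cos (ψ u) := by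
  by_contra! hneg
  obtain ⟨v, hv, hcos⟩ := hS.intermediate_value hu ha (continuous_cos.comp_continuousOn hψ)
    ⟨hneg, by simp [hψa]⟩
  have hsin_sq : sin (ψ v) ^ 2 = 1 := by
    rw [← sin_sq_add_cos_sq (ψ v), show cos (ψ v) = 0 from hcos]
    ring
  exact ((sq_lt_one_iff_abs_lt_one _).2 (hsin v hv)).ne hsin_sq

lemma sq_sin_mul_eq_of_sin_eq_mul_sin {κ a b a' b' : ℝ} (hsin : sin b = κ * sin a)
    (hcos : 0 < cos b) (ha' : invSqrtEvenPart (sin b) * a' = 1)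
    (hb' : cos b * b' = κ * (cos a * a')) :
    (sin b * b') ^ 2 = 2 * (1 - cos b) * (cos b ^ 2 - (1 - κ ^ 2)) := by
  have hpyth := sin_sq_add_cos_sq b
  have ha'sq := one_add_mul_sq_eq_of_invSqrtEvenPart_mul_eq_one hcos hpyth ha'
  have hκcos : κ ^ 2 * cos a ^ 2 = cos b ^ 2 - (1 - κ ^ 2) := by
    linear_combination κ ^ 2 * sin_sq_add_cos_sq a - hpyth + (sin b + κ * sin a) * hsin
  have hscaled : (1 + cos b) * cos b ^ 2 * (sin b * b') ^ 2 =
      (1 + cos b) * cos b ^ 2 * (2 * (1 - cos b) * (cos b ^ 2 - (1 - κ ^ 2))) := by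
    linear_combination sin b ^ 2 * (1 + cos b) * ((cos b * b' + κ * cos a * a') * hb'
      + a' ^ 2 * hκcos) + sin b ^ 2 * (cos b ^ 2 - (1 - κ ^ 2)) * ha'sq
      + 2 * cos b ^ 2 * (cos b ^ 2 - (1 - κ ^ 2)) * hpyth
  exact mul_left_cancel₀ (by positivity) hscaled

theorem stmt1_general (κ : ℝ) (hκ : κ ∈ Set.Ioo (0:ℝ) 1) (lam : ℝ) (hlam : lam = Real.sqrt (1 - κ^2))
    (ε : ℝ) (φ ψ : ℝ → ℝ)
    (hψ0 : ψ 0 = 0)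
    (hφdiff : ∀ u ∈ Set.Ioo (-ε) ε, DifferentiableAt ℝ φ u)
    (hψdiff : ∀ u ∈ Set.Ioo (-ε) ε, DifferentiableAt ℝ ψ u)
    (hsin : ∀ u ∈ Set.Ioo (-ε) ε, Real.sin (ψ u) = κ * Real.sin (φ u))
    (hinv : ∀ u ∈ Set.Ioo (-ε) ε,
      (∫ t in (0:ℝ)..(φ u), hyp (1/4) (3/4) (1/2) (κ^2 * Real.sin t ^ 2)) = u)
    (d : ℝ → ℝ) (hd : d = fun u => Real.cos (ψ u)) :
    d 0 = 1 ∧ ∀ u ∈ Set.Ioo (-ε) ε,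
      (deriv d u)^2 = 2 * (1 - d u) * ((d u)^2 - lam^2) := by
  have hκ1 : |κ| < 1 := abs_lt.2 ⟨by linarith [hκ.1], hκ.2⟩
  have hlam2 : lam ^ 2 = 1 - κ ^ 2 := by
    rw [hlam, sq_sqrt (by nlinarith [hκ.1, hκ.2])]
  refine ⟨by simp [hd, hψ0], fun u hu => ?_⟩
  have hnhds : ∀ᶠ v in 𝓝 u, v ∈ Set.Ioo (-ε) ε := isOpen_Ioo.mem_nhds hu
  have hcos : 0 < cos (ψ u) :=
    isPreconnected_Ioo.cos_pos_of_abs_sin_lt_one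
      (fun v hv => (hψdiff v hv).continuousAt.continuousWithinAt)
      ⟨by linarith [hu.1, hu.2], by linarith [hu.1, hu.2]⟩ hu hψ0
      (fun v hv => hsin v hv ▸ abs_mul_sin_lt_one hκ1 (φ v))
  have hφ' : invSqrtEvenPart (sin (ψ u)) * deriv φ u = 1 := by
    rw [hsin u hu]
    refine mul_deriv_eq_one_of_integral_eventuallyEq (a := 0)
      (continuous_invSqrtEvenPart_mul_sin hκ1) (hφdiff u hu) ?_
    filter_upwards [hnhds] with v hv
    simpa only [hyp_quarter_threeQuarters_half_sq_mul_sin_sq hκ1, id] using hinv v hv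
  have hψ' := cos_mul_deriv_eq_of_sin_eventuallyEq (hφdiff u hu) (hψdiff u hu)
    (by filter_upwards [hnhds] with v hv using hsin v hv)
  have hd' : deriv d u = -(sin (ψ u) * deriv ψ u) := by
    rw [hd, neg_mul_eq_neg_mul]
    exact ((hasDerivAt_cos (ψ u)).comp u (hψdiff u hu).hasDerivAt).deriv
  rw [hd', neg_sq, hlam2, hd]
  exact sq_sin_mul_eq_of_sin_eq_mul_sin (hsin u hu) hcos hφ' hψ'

theorem stmt1 (κ : ℝ) (hκ : κ ∈ Set.Ioo (0:ℝ) 1) (lam : ℝ) (hlam : lam = Real.sqrt (1 - κ^2))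
    (ε : ℝ) (hε : 0 < ε) (φ ψ : ℝ → ℝ)
    (hφ0 : φ 0 = 0) (hψ0 : ψ 0 = 0)
    (hφdiff : ∀ u ∈ Set.Ioo (-ε) ε, DifferentiableAt ℝ φ u)
    (hψdiff : ∀ u ∈ Set.Ioo (-ε) ε, DifferentiableAt ℝ ψ u)
    (hsin : ∀ u ∈ Set.Ioo (-ε) ε, Real.sin (ψ u) = κ * Real.sin (φ u))
    (hinv : ∀ u ∈ Set.Ioo (-ε) ε,
      (∫ t in (0:ℝ)..(φ u), hyp (1/4) (3/4) (1/2) (κ^2 * Real.sin t ^ 2)) = u)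
    (d : ℝ → ℝ) (hd : d = fun u => Real.cos (ψ u)) :
    d 0 = 1 ∧ ∀ u ∈ Set.Ioo (-ε) ε,
      (deriv d u)^2 = 2 * (1 - d u) * ((d u)^2 - lam^2) :=
  stmt1_general κ hκ lam hlam ε φ ψ hψ0 hφdiff hψdiff hsin hinv d hd
end

section
/- Let α, β ∈ (0, π/2) be complementary (α + β = π/2), and let I(γ) = ∫₀^γ cos(t/2)/√(cos²t - cos²γ) dt for an acute angle γ. Then ∫_{-cos β}^{cos β} dy/√(2(1-y)(cos²β - y²)) = √2 · I(α). -/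
/-!
Substituting `y = sin t`, `t ∈ [-α, α]` (note `cos β = sin α`), turns `cos β ^ 2 - y ^ 2` into
`cos t ^ 2 - cos α ^ 2`, and `cos t / √(2 (1 - sin t)) = (cos (t/2) + sin (t/2)) / √2` because
`1 + sin t = (cos (t/2) + sin (t/2)) ^ 2`. Over `[-α, α]` the `sin (t/2)` part of the new integrand
is odd and integrates to zero, while the `cos (t/2)` part is even. Splitting the integral is
legitimate because `cos t ^ 2 - cos α ^ 2 ≥ sin α cos α (α - t)` on `[0, α]`, so the singularity
at `t = α` is of order `(α - t) ^ (-1/2)`.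
-/

open Real Set MeasureTheory intervalIntegral

section Symmetric

variable {E : Type*} [NormedAddCommGroup E] {f : ℝ → E} {a : ℝ}

theorem Function.Even.intervalIntegrable_neg (hf : Function.Even f)
    (hint : IntervalIntegrable f volume 0 a) : IntervalIntegrable f volume (-a) 0 := by
  simpa [hf _] using ((IntervalIntegrable.iff_comp_neg (f := f)).mp hint).symm

variable [NormedSpace ℝ E]

theorem Function.Even.intervalIntegral_neg_self_eq_two_smul (hf : Function.Even f)
    (hint : IntervalIntegrable f volume 0 a) :
    ∫ x in -a..a, f x = 2 • ∫ x in 0..a, f x := by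
  rw [← integral_add_adjacent_intervals (hf.intervalIntegrable_neg hint) hint, two_smul]
  congr 1
  simpa [hf _] using (integral_comp_neg (a := 0) (b := a) f).symm

theorem Function.Odd.intervalIntegral_neg_self_eq_zero (hf : Function.Odd f) (a : ℝ) :
    ∫ x in -a..a, f x = 0 := by
  have h : ∫ x in -a..a, f x = -∫ x in -a..a, f x := by
    conv_lhs => rw [← neg_neg a, ← integral_comp_neg]
    simp only [hf _, intervalIntegral.integral_neg, neg_neg]
  linear_combination (norm := module) (1 / 2 : ℝ) • h

end Symmetric

theorem intervalIntegrable_inv_sqrt_of_mul_sub_le {D : ℝ → ℝ} {a b K : ℝ} (hab : a ≤ b)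
    (hK : 0 < K) (hD : Measurable D) (hle : ∀ t ∈ Ioo a b, K * (b - t) ≤ D t) :
    IntervalIntegrable (fun t => (√(D t))⁻¹) volume a b := by
  have hdom : IntervalIntegrable (fun t => (√K)⁻¹ * (b - t) ^ (-(1 / 2) : ℝ)) volume a b := by
    have := (intervalIntegrable_rpow' (a := 0) (b := b - a) (r := -(1 / 2)) (by norm_num))
      |>.comp_sub_left b
    simpa using this.symm.const_mul (√K)⁻¹
  rw [intervalIntegrable_iff_integrableOn_Ioo_of_le hab] at hdom ⊢
  refine hdom.mono' hD.sqrt.inv.aestronglyMeasurable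
    (ae_restrict_of_forall_mem measurableSet_Ioo fun t ht => ?_)
  have hbt : 0 < b - t := sub_pos.mpr ht.2
  rw [norm_inv, norm_of_nonneg (sqrt_nonneg _), rpow_neg hbt.le, ← sqrt_eq_rpow, ← mul_inv,
    ← sqrt_mul hK.le]
  exact inv_anti₀ (by positivity) (sqrt_le_sqrt (hle t ht))

theorem sin_mul_cos_mul_sub_le_cos_sq_sub_cos_sq {α t : ℝ} (hα : α < π / 2) (ht : t ∈ Icc 0 α) :
    sin α * cos α * (α - t) ≤ cos t ^ 2 - cos α ^ 2 := by
  have hα0 : 0 ≤ α := ht.1.trans ht.2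
  have hsin_sub : cos α * (α - t) ≤ sin α - sin t := by
    refine (convex_Icc 0 α).mul_sub_le_image_sub_of_le_deriv continuous_sin.continuousOn
      differentiable_sin.differentiableOn (fun x hx => ?_) t ht α ⟨hα0, le_rfl⟩ ht.2
    rw [interior_Icc] at hx
    rw [Real.deriv_sin]
    exact cos_le_cos_of_nonneg_of_le_pi hx.1.le (by linarith) hx.2.le
  have hsin_t : 0 ≤ sin t := sin_nonneg_of_nonneg_of_le_pi ht.1 (by linarith [ht.2])
  have hsin_α : 0 ≤ sin α := sin_nonneg_of_nonneg_of_le_pi hα0 (by linarith)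
  have hlin : 0 ≤ cos α * (α - t) :=
    mul_nonneg (cos_nonneg_of_mem_Icc ⟨by linarith, hα.le⟩) (by linarith [ht.2])
  have hsq : cos t ^ 2 - cos α ^ 2 = (sin α - sin t) * (sin α + sin t) := by
    nlinarith [sin_sq_add_cos_sq t, sin_sq_add_cos_sq α]
  rw [hsq]
  nlinarith [mul_le_mul hsin_sub (le_add_of_nonneg_right hsin_t : sin α ≤ sin α + sin t) hsin_α
    (hlin.trans hsin_sub)]

theorem intervalIntegrable_inv_sqrt_cos_sq_sub_cos_sq {α : ℝ} (hα : α ∈ Ioo 0 (π / 2)) :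
    IntervalIntegrable (fun t => (√(cos t ^ 2 - cos α ^ 2))⁻¹) volume (-α) α := by
  have hright : IntervalIntegrable (fun t => (√(cos t ^ 2 - cos α ^ 2))⁻¹) volume 0 α :=
    intervalIntegrable_inv_sqrt_of_mul_sub_le hα.1.le
      (mul_pos (sin_pos_of_pos_of_lt_pi hα.1 (by linarith [hα.2, pi_pos]))
        (cos_pos_of_mem_Ioo ⟨by linarith [hα.1, pi_pos], hα.2⟩))
      (by fun_prop)
      fun t ht => sin_mul_cos_mul_sub_le_cos_sq_sub_cos_sq hα.2 (Ioo_subset_Icc_self ht)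
  exact (Function.Even.intervalIntegrable_neg (fun t => by simp) hright).trans hright

theorem cos_div_sqrt_two_mul_one_sub_sin {t : ℝ} (ht : t ∈ Ioo (-(π / 2)) (π / 2)) :
    cos t / √(2 * (1 - sin t)) = (cos (t / 2) + sin (t / 2)) / √2 := by
  set u := cos (t / 2) + sin (t / 2) with hu_def
  have hu_sq : u ^ 2 = 1 + sin t := by
    rw [hu_def, ← sin_sq_add_cos_sq (t / 2), show sin t = 2 * sin (t / 2) * cos (t / 2) by
      rw [← sin_two_mul]; ring_nf]
    ring
  have hu : 0 < u := by
    have h := sin_pos_of_pos_of_lt_pi (x := t / 2 + π / 4) (by linarith [ht.1])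
      (by linarith [ht.2, pi_pos])
    rw [sin_add, sin_pi_div_four, cos_pi_div_four] at h
    nlinarith [sqrt_nonneg 2]
  have hcos : 0 < cos t := cos_pos_of_mem_Ioo ht
  have hone_add_sin : 0 < 1 + sin t := hu_sq ▸ by positivity
  have hsqrt : √(2 * (1 - sin t)) = √2 * cos t / u := by
    rw [show 2 * (1 - sin t) = (√2 * cos t / u) ^ 2 by
      rw [div_pow, mul_pow, sq_sqrt zero_le_two, hu_sq, cos_sq']
      field_simp
      ring]
    exact sqrt_sq (by positivity)
  rw [hsqrt]
  field_simp

theorem integral_inv_sqrt_eq_integral_half_angle {α : ℝ} (hα : |α| < π / 2) :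
    ∫ y in -sin α..sin α, 1 / √(2 * (1 - y) * (sin α ^ 2 - y ^ 2)) =
      ∫ t in -α..α, (cos (t / 2) + sin (t / 2)) / √2 * (√(cos t ^ 2 - cos α ^ 2))⁻¹ := by
  have hsub : uIcc (-α) α ⊆ Ioo (-(π / 2)) (π / 2) := fun t ht => by
    rw [mem_uIcc] at ht
    constructor <;> rcases ht with ht | ht <;> linarith [abs_lt.mp hα]
  rw [← sin_neg, ← integral_comp_mul_deriv_of_deriv_nonneg continuous_sin.continuousOn
    (fun x _ => hasDerivAt_sin x)
    (fun x hx => (cos_pos_of_mem_Ioo (hsub (Ioo_subset_Icc_self hx))).le)]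
  refine integral_congr fun t ht => ?_
  have hsq : sin α ^ 2 - sin t ^ 2 = cos t ^ 2 - cos α ^ 2 := by
    linarith [sin_sq_add_cos_sq t, sin_sq_add_cos_sq α]
  simp only [Function.comp_apply]
  rw [hsq, sqrt_mul (by linarith [sin_le_one t]), ← cos_div_sqrt_two_mul_one_sub_sin (hsub ht)]
  ring

theorem stmt8_general (α β : ℝ) (hα : α ∈ Set.Ioo 0 (π/2))
    (hcompl : α + β = π/2) :
    (∫ y in (-(Real.cos β))..(Real.cos β),
        1 / Real.sqrt (2 * (1 - y) * (Real.cos β ^ 2 - y^2))) =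
    Real.sqrt 2 *
      ∫ t in (0:ℝ)..α, Real.cos (t/2) / Real.sqrt (Real.cos t ^ 2 - Real.cos α ^ 2) := by
  set φ := fun t => (√(cos t ^ 2 - cos α ^ 2))⁻¹
  have hφ := intervalIntegrable_inv_sqrt_cos_sq_sub_cos_sq hα
  have hcos_half : IntervalIntegrable (fun t => cos (t / 2) * φ t) volume (-α) α :=
    hφ.continuousOn_mul (by fun_prop)
  have hsin_half : IntervalIntegrable (fun t => sin (t / 2) * φ t) volume (-α) α :=
    hφ.continuousOn_mul (by fun_prop)
  rw [show β = π / 2 - α by linarith, cos_pi_div_two_sub,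
    integral_inv_sqrt_eq_integral_half_angle (abs_lt.mpr ⟨by linarith [hα.1, pi_pos], hα.2⟩)]
  calc ∫ t in -α..α, (cos (t / 2) + sin (t / 2)) / √2 * φ t
      = (√2)⁻¹ * ((∫ t in -α..α, cos (t / 2) * φ t) + ∫ t in -α..α, sin (t / 2) * φ t) := by
        rw [← integral_add hcos_half hsin_half, ← intervalIntegral.integral_const_mul]
        congr 1 with t
        ring
    _ = (√2)⁻¹ * ((2 • ∫ t in 0..α, cos (t / 2) * φ t) + 0) := by
        rw [Function.Even.intervalIntegral_neg_self_eq_two_smul (fun t => by simp [φ, neg_div])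
            (hcos_half.mono_set (uIcc_subset_uIcc (by simp [hα.1.le]) right_mem_uIcc)),
          Function.Odd.intervalIntegral_neg_self_eq_zero (fun t => by simp [φ, neg_div])]
    _ = √2 * ∫ t in 0..α, cos (t / 2) * φ t := by
        rw [add_zero, two_smul, ← two_mul, ← mul_assoc, inv_mul_eq_div, div_sqrt]

theorem stmt8 (α β : ℝ) (hα : α ∈ Set.Ioo 0 (π/2)) (hβ : β ∈ Set.Ioo 0 (π/2))
    (hcompl : α + β = π/2) :
    (∫ y in (-(Real.cos β))..(Real.cos β),
        1 / Real.sqrt (2 * (1 - y) * (Real.cos β ^ 2 - y^2))) =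
    Real.sqrt 2 *
      ∫ t in (0:ℝ)..α, Real.cos (t/2) / Real.sqrt (Real.cos t ^ 2 - Real.cos α ^ 2) :=
  stmt8_general α β hα hcompl
end

section
/- For κ ∈ (0,1): ∫₀^{π/2} F(1/4, 3/4; 1/2; κ² sin²t) dt = (π/2) F(1/4, 3/4; 1; κ²). -/
/-!
Expand the integrand as a power series in `κ² sin² t` and integrate termwise, the `n`-th term
being dominated by `|cₙ| κ²ⁿ` with `cₙ` its coefficient. Wallis' formula
`∫₀^{π/2} sin²ⁿ t dt = (π/2) (1/2)ₙ / n!` then trades the Pochhammer symbol `(1/2)ₙ` in the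
denominator of the `n`-th coefficient for `(1)ₙ = n!`, turning `F(a, b; 1/2; κ² sin² t)` into
`F(a, b; 1; κ²)`.
-/

open Real

open Finset MeasureTheory
open scoped Interval

noncomputable def hypCoeff (a b c : ℝ) (n : ℕ) : ℝ :=
  (∏ i ∈ range n, (a + i)) * (∏ i ∈ range n, (b + i)) /
    ((∏ i ∈ range n, (c + i)) * (n.factorial : ℝ))

theorem hyp_eq_tsum_hypCoeff (a b c x : ℝ) : hyp a b c x = ∑' n, hypCoeff a b c n * x ^ n := rfl

theorem hypCoeff_eq_prod (a b c : ℝ) (n : ℕ) :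
    hypCoeff a b c n = ∏ i ∈ range n, (a + i) * (b + i) / ((c + i) * (1 + i)) := by
  have hfac : (n.factorial : ℝ) = ∏ i ∈ range n, (1 + (i : ℝ)) := by
    rw [← prod_range_add_one_eq_factorial]
    push_cast
    exact prod_congr rfl fun i _ => add_comm _ _
  rw [hypCoeff, hfac, ← prod_mul_distrib, ← prod_mul_distrib, ← prod_div_distrib]

theorem abs_hypCoeff_le_one {a b c : ℝ} (ha : 0 ≤ a) (hb : 0 ≤ b) (hc : 0 < c)
    (hab : a * b ≤ c) (hab' : a + b ≤ c + 1) (n : ℕ) : |hypCoeff a b c n| ≤ 1 := by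
  rw [hypCoeff_eq_prod, abs_prod]
  refine prod_le_one (fun i _ => abs_nonneg _) fun i _ => ?_
  have hi : (0 : ℝ) ≤ i := i.cast_nonneg
  rw [abs_of_nonneg (by positivity), div_le_one (by positivity)]
  nlinarith

theorem hypCoeff_half_mul_prod (a b : ℝ) (n : ℕ) :
    hypCoeff a b (1 / 2) n * ∏ i ∈ range n, (2 * (i : ℝ) + 1) / (2 * i + 2) =
      hypCoeff a b 1 n := by
  have hratio : ∏ i ∈ range n, (2 * (i : ℝ) + 1) / (2 * i + 2) =
      (∏ i ∈ range n, (1 / 2 + (i : ℝ))) / ∏ i ∈ range n, (1 + (i : ℝ)) := by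
    rw [← prod_div_distrib]
    refine prod_congr rfl fun i _ => ?_
    have hi : (1 : ℝ) + i ≠ 0 := by positivity
    field_simp
    ring
  have hhalf : ∏ i ∈ range n, (1 / 2 + (i : ℝ)) ≠ 0 := by positivity
  have hone : ∏ i ∈ range n, (1 + (i : ℝ)) ≠ 0 := by positivity
  have hfac : (n.factorial : ℝ) ≠ 0 := by positivity
  rw [hratio, hypCoeff, hypCoeff]
  field_simp

theorem integral_sin_pow_even_half_pi (n : ℕ) :
    ∫ x in (0 : ℝ)..(π / 2), sin x ^ (2 * n) =
      π / 2 * ∏ i ∈ range n, (2 * (i : ℝ) + 1) / (2 * i + 2) := by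
  have hint : ∀ a b : ℝ, IntervalIntegrable (fun x => sin x ^ (2 * n)) volume a b :=
    fun _ _ => (continuous_sin.pow _).intervalIntegrable _ _
  have hsymm : ∫ x in (π / 2)..π, sin x ^ (2 * n) = ∫ x in (0 : ℝ)..(π / 2), sin x ^ (2 * n) := by
    have h := intervalIntegral.integral_comp_sub_left (fun x => sin x ^ (2 * n)) π
      (a := 0) (b := π / 2)
    simp only [sin_pi_sub, sub_zero, sub_half] at h
    exact h.symm
  have hsplit := intervalIntegral.integral_add_adjacent_intervals (hint 0 (π / 2)) (hint (π / 2) π)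
  rw [integral_sin_pow_even, hsymm] at hsplit
  linarith

theorem hasSum_intervalIntegral_tsum_mul_pow {C : ℕ → ℝ} {f : ℝ → ℝ} {a b r : ℝ}
    (hC : Summable fun n => |C n| * r ^ n)
    (hf : AEStronglyMeasurable f (volume.restrict (Ι a b))) (hfr : ∀ t ∈ Ι a b, |f t| ≤ r) :
    HasSum (fun n => C n * ∫ t in a..b, f t ^ n) (∫ t in a..b, ∑' n, C n * f t ^ n) := by
  have hbound : ∀ n, ∀ t ∈ Ι a b, |C n * f t ^ n| ≤ |C n| * r ^ n := fun n t ht => by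
    rw [abs_mul, abs_pow]
    exact mul_le_mul_of_nonneg_left (pow_le_pow_left₀ (abs_nonneg _) (hfr t ht) n) (abs_nonneg _)
  simp_rw [← intervalIntegral.integral_const_mul]
  refine intervalIntegral.hasSum_integral_of_dominated_convergence (fun n _ => |C n| * r ^ n)
    (fun n => (hf.pow n).const_mul _) (fun n => .of_forall (hbound n)) (.of_forall fun _ _ => hC)
    intervalIntegrable_const (.of_forall fun t ht => ?_)
  exact (hC.of_norm_bounded fun n => hbound n t ht).hasSum

theorem integral_hyp_half_sin_sq {a b x : ℝ}
    (hsum : Summable fun n => |hypCoeff a b (1 / 2) n| * |x| ^ n) :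
    ∫ t in (0 : ℝ)..(π / 2), hyp a b (1 / 2) (x * sin t ^ 2) = π / 2 * hyp a b 1 x := by
  have hdom : ∀ t ∈ Ι 0 (π / 2), |x * sin t ^ 2| ≤ |x| := fun t _ => by
    rw [abs_mul, abs_of_nonneg (sq_nonneg (sin t))]
    exact mul_le_of_le_one_right (abs_nonneg x) (sin_sq_le_one t)
  have htermwise := hasSum_intervalIntegral_tsum_mul_pow hsum
    (by fun_prop : Continuous fun t => x * sin t ^ 2).aestronglyMeasurable hdom
  simp_rw [hyp_eq_tsum_hypCoeff, ← htermwise.tsum_eq, ← tsum_mul_left]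
  refine tsum_congr fun n => ?_
  simp_rw [mul_pow, ← pow_mul, intervalIntegral.integral_const_mul,
    integral_sin_pow_even_half_pi, ← hypCoeff_half_mul_prod a b n]
  ring

theorem stmt14 (κ : ℝ) (hκ : κ ∈ Set.Ioo (0:ℝ) 1) :
    (∫ t in (0:ℝ)..(π/2), hyp (1/4) (3/4) (1/2) (κ^2 * Real.sin t ^ 2)) =
    (π/2) * hyp (1/4) (3/4) 1 (κ^2) := by
  obtain ⟨hκ0, hκ1⟩ := hκ
  have hx : |κ ^ 2| < 1 := by
    rw [abs_of_nonneg (sq_nonneg κ)]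
    nlinarith
  refine integral_hyp_half_sin_sq (.of_nonneg_of_le (fun n => by positivity) (fun n => ?_)
    (summable_geometric_of_lt_one (abs_nonneg _) hx))
  exact mul_le_of_le_one_left (by positivity) (abs_hypCoeff_le_one (by norm_num) (by norm_num)
    (by norm_num) (by norm_num) (by norm_num) n)
end
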